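/- arXiv:2501.10812 — 2 statements merged into one kernel-verified Lean document; each statement's English description precedes it below -/
import Mathlib

section
/- For a finite undirected graph G, the minimum over all acyclic orientations D of G of the number of vertices on a longest directed path in D equals the chromatic number χ(G). -/
/-!
Give every vertex its level, the number of vertices on a longest directed path ending at it.
In an acyclic orientation the level strictly increases along every arc, so adjacent vertices get
different levels, and the levels form a proper colouring by as many colours as there are
vertices on a longest path. Conversely, orienting every edge of a proper `k`-colouring towards
the larger colour gives an acyclic orientation along whose paths the colour strictly increases,
so no path has more than `k` vertices.
-/

/-- Number of vertices on a longest directed path in `D`. -/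
noncomputable def dpathLen {V : Type*} (D : V → V → Prop) : ℕ :=
  sSup {n | ∃ l : List V, l.Chain' D ∧ l.Nodup ∧ l.length = n}

/-- The level of `v`: number of vertices on a longest directed path ending at `v`. -/
noncomputable def dlevel {V : Type*} (D : V → V → Prop) (v : V) : ℕ :=
  sSup {n | ∃ l : List V, l.Chain' D ∧ l.Nodup ∧ l.getLast? = some v ∧ l.length = n}

/-- A directed graph is acyclic if no vertex reaches itself by a nonempty directed walk. -/
def Acyclic {V : Type*} (D : V → V → Prop) : Prop := ∀ v, ¬ Relation.TransGen D v v

/-- `D` is an orientation of `G`: every directed edge lies on an edge of `G`, and every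
edge of `G` is directed in exactly one of its two directions. -/
def IsOrientation {V : Type*} (G : SimpleGraph V) (D : V → V → Prop) : Prop :=
  (∀ i j, D i j → G.Adj i j) ∧ (∀ i j, G.Adj i j → (D i j ↔ ¬ D j i))

/-- The directed coupling graph induced by prioritization `p` on coupling graph `G`. -/
def couplingDAG {V : Type*} (G : SimpleGraph V) (p : V → ℕ) : V → V → Prop :=
  fun i j => G.Adj i j ∧ p i < p j

/-- `p` is a valid prioritization for `G`: adjacent vertices get distinct priorities. -/
def ValidPrio {V : Type*} (G : SimpleGraph V) (p : V → ℕ) : Prop :=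
  ∀ i j, G.Adj i j → p i ≠ p j

open Relation

section Paths

variable {V : Type*} {D : V → V → Prop}

lemma acyclic_of_rel_lt {α : Type*} [Preorder α] (f : V → α)
    (hf : ∀ u v, D u v → f u < f v) : Acyclic D := fun v hv =>
  lt_irrefl (f v) (by simpa only [transGen_eq_self] using TransGen.lift f hf v v hv)

lemma dpathLen_le_card_of_rel_lt {α : Type*} [Preorder α] [Fintype α] (f : V → α)
    (hf : ∀ u v, D u v → f u < f v) : dpathLen D ≤ Fintype.card α := by
  refine csSup_le ⟨0, [], List.isChain_nil, List.nodup_nil, rfl⟩ ?_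
  rintro _ ⟨l, hl, -, rfl⟩
  have hmap : (l.map f).IsChain (· < ·) :=
    (List.isChain_map f).mpr (hl.imp fun u v h => hf u v h)
  have hnd : (l.map f).Nodup := (List.isChain_iff_pairwise.mp hmap).imp ne_of_lt
  simpa only [List.length_map] using hnd.length_le_card

lemma reflTransGen_of_mem_of_getLast? {l : List V} {u v : V} (hl : l.IsChain D)
    (hlast : l.getLast? = some v) (hu : u ∈ l) : ReflTransGen D u v :=
  hl.backwards_induction (ReflTransGen D · v) l (fun _ _ => .head)
    (fun hne => by rw [List.getLast?_eq_some_getLast hne, Option.some.injEq] at hlast; rw [hlast])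
    u hu

variable [Fintype V]

lemma le_dpathLen {l : List V} (hl : l.IsChain D) (hnd : l.Nodup) : l.length ≤ dpathLen D :=
  le_csSup ⟨Fintype.card V, by rintro _ ⟨l, -, hnd, rfl⟩; exact hnd.length_le_card⟩
    ⟨l, hl, hnd, rfl⟩

lemma bddAbove_dlevel_set (D : V → V → Prop) (v : V) :
    BddAbove
      {n | ∃ l : List V, l.IsChain D ∧ l.Nodup ∧ l.getLast? = some v ∧ l.length = n} :=
  ⟨Fintype.card V, by rintro _ ⟨l, -, hnd, -, rfl⟩; exact hnd.length_le_card⟩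

lemma le_dlevel {l : List V} {v : V} (hl : l.IsChain D) (hnd : l.Nodup)
    (hlast : l.getLast? = some v) : l.length ≤ dlevel D v :=
  le_csSup (bddAbove_dlevel_set D v) ⟨l, hl, hnd, hlast, rfl⟩

lemma one_le_dlevel (D : V → V → Prop) (v : V) : 1 ≤ dlevel D v :=
  le_dlevel (l := [v]) (List.isChain_singleton v) (List.nodup_singleton v) rfl

lemma exists_path_length_eq_dlevel (D : V → V → Prop) (v : V) :
    ∃ l : List V, l.IsChain D ∧ l.Nodup ∧ l.getLast? = some v ∧ l.length = dlevel D v :=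
  Nat.sSup_mem
    ⟨1, by exact ⟨[v], List.isChain_singleton v, List.nodup_singleton v, rfl, rfl⟩⟩
    (bddAbove_dlevel_set D v)

lemma dlevel_le_dpathLen (D : V → V → Prop) (v : V) : dlevel D v ≤ dpathLen D := by
  obtain ⟨l, hl, hnd, -, hlen⟩ := exists_path_length_eq_dlevel D v
  exact hlen ▸ le_dpathLen hl hnd

lemma dlevel_lt_of_rel (hA : Acyclic D) {u v : V} (huv : D u v) : dlevel D u < dlevel D v := by
  obtain ⟨l, hl, hnd, hlast, hlen⟩ := exists_path_length_eq_dlevel D u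
  have hv : v ∉ l := fun hv => hA v (.tail' (reflTransGen_of_mem_of_getLast? hl hlast hv) huv)
  have hext : (l ++ [v]).length ≤ dlevel D v :=
    le_dlevel (hl.append (List.isChain_singleton v) (by simpa [hlast] using huv))
      (hnd.append (List.nodup_singleton v) (List.disjoint_singleton.mpr hv))
      (by simp)
  simpa [hlen] using hext

end Paths

section Orientations

variable {V : Type*} {G : SimpleGraph V}

lemma IsOrientation.rel_or_rel {D : V → V → Prop} (hO : IsOrientation G D) {u v : V}
    (h : G.Adj u v) : D u v ∨ D v u :=
  or_iff_not_imp_right.mpr (hO.2 u v h).mpr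

lemma dlevel_ne_of_adj [Fintype V] {D : V → V → Prop} (hO : IsOrientation G D) (hA : Acyclic D)
    {u v : V} (h : G.Adj u v) : dlevel D u ≠ dlevel D v := by
  rcases hO.rel_or_rel h with huv | hvu
  exacts [(dlevel_lt_of_rel hA huv).ne, (dlevel_lt_of_rel hA hvu).ne']

lemma colorable_dpathLen_of_acyclic [Fintype V] {D : V → V → Prop} (hO : IsOrientation G D)
    (hA : Acyclic D) : G.Colorable (dpathLen D) := by
  refine (G.colorable_iff_exists_bdd_nat_coloring _).mpr
    ⟨.mk (fun v => dlevel D v - 1) fun {u v} h => ?_, fun v => ?_⟩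
  · have := dlevel_ne_of_adj hO hA h
    have := one_le_dlevel D u
    have := one_le_dlevel D v
    omega
  · have := one_le_dlevel D v
    have := dlevel_le_dpathLen D v
    exact show dlevel D v - 1 < dpathLen D by omega

lemma isOrientation_couplingDAG {p : V → ℕ} (hp : ValidPrio G p) :
    IsOrientation G (couplingDAG G p) :=
  ⟨fun _ _ h => h.1, fun u v h =>
    ⟨fun huv hvu => huv.2.not_gt hvu.2,
      fun hvu => ⟨h, lt_of_le_of_ne (not_lt.mp fun hlt => hvu ⟨h.symm, hlt⟩)
        (hp u v h)⟩⟩⟩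

lemma exists_acyclic_orientation_dpathLen_le {k : ℕ} (hk : G.Colorable k) :
    ∃ D : V → V → Prop, IsOrientation G D ∧ Acyclic D ∧ dpathLen D ≤ k := by
  obtain ⟨c⟩ := hk
  have hc : ∀ u v, couplingDAG G (fun v => c v) u v → c u < c v := fun _ _ h => h.2
  refine ⟨couplingDAG G (fun v => c v),
    isOrientation_couplingDAG fun u v h => Fin.val_injective.ne (c.valid h),
    acyclic_of_rel_lt c hc, ?_⟩
  simpa using dpathLen_le_card_of_rel_lt c hc

end Orientations

theorem stmt4 {V : Type*} [Fintype V] (G : SimpleGraph V) :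
    (↑(sInf {n : ℕ | ∃ D : V → V → Prop,
        IsOrientation G D ∧ Acyclic D ∧ dpathLen D = n}) : ℕ∞) =
      G.chromaticNumber := by
  set S := {n : ℕ | ∃ D : V → V → Prop, IsOrientation G D ∧ Acyclic D ∧ dpathLen D = n}
  apply le_antisymm
  · refine SimpleGraph.le_chromaticNumber_iff_colorable.mpr fun k hk => ?_
    obtain ⟨D, hO, hA, hD⟩ := exists_acyclic_orientation_dpathLen_le hk
    have hmem : dpathLen D ∈ S := ⟨D, hO, hA, rfl⟩
    exact_mod_cast (Nat.sInf_le hmem).trans hD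
  · have hS : S.Nonempty := by
      obtain ⟨D, hO, hA, -⟩ := exists_acyclic_orientation_dpathLen_le G.colorable_of_fintype
      exact ⟨dpathLen D, D, hO, hA, rfl⟩
    obtain ⟨D, hO, hA, hD⟩ := Nat.sInf_mem hS
    rw [← hD]
    exact (colorable_dpathLen_of_acyclic hO hA).chromaticNumber_le
end

section
/- Let G be a path graph on n ≥ 2 vertices v_1, …, v_n (edges {v_k, v_{k+1}}). The prioritization p(v_k) = k yields a directed coupling graph whose longest directed path has n vertices (n computation levels), while the chromatic-number-minimal prioritization via a proper 2-coloring yields only 2 computation levels. -/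
/-!
Along a directed path of the coupling DAG the priorities strictly increase, so a path has at
most as many vertices as there are distinct priorities. The identity prioritization of the
path graph has the whole path `0, 1, …, n - 1` as a directed path, while the parity
prioritization takes only two values and still orients the edge `{0, 1}`.
-/

section dpathLen

variable {V : Type*} {D : V → V → Prop}

theorem dpathLen_le_of_forall {m : ℕ} (h : ∀ l : List V, l.IsChain D → l.Nodup → l.length ≤ m) :
    dpathLen D ≤ m :=
  csSup_le' fun _ ⟨l, hc, hl, hlen⟩ => hlen ▸ h l hc hl

variable [Fintype V]

theorem dpathLen_le_card : dpathLen D ≤ Fintype.card V :=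
  dpathLen_le_of_forall fun _ _ hl => hl.length_le_card

theorem length_le_dpathLen {l : List V} (hc : l.IsChain D) (hl : l.Nodup) :
    l.length ≤ dpathLen D :=
  le_csSup ⟨Fintype.card V, fun _ ⟨_, _, hl', hlen⟩ => hlen ▸ hl'.length_le_card⟩ ⟨l, hc, hl, rfl⟩

end dpathLen

section couplingDAG

variable {V : Type*} {G : SimpleGraph V} {p : V → ℕ}

theorem length_le_card_of_isChain_couplingDAG {s : Finset ℕ} (hs : ∀ v, p v ∈ s) {l : List V}
    (hc : l.IsChain (couplingDAG G p)) : l.length ≤ s.card := by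
  have hmono : (l.map p).IsChain (· < ·) := List.isChain_map_of_isChain p (fun _ _ h => h.2) hc
  have hnodup : (l.map p).Nodup := (List.isChain_iff_pairwise.mp hmono).nodup
  calc l.length = (l.map p).length := (List.length_map p).symm
    _ = (l.map p).toFinset.card := (List.toFinset_card_of_nodup hnodup).symm
    _ ≤ s.card := Finset.card_le_card fun x hx => by
        obtain ⟨v, -, rfl⟩ := List.mem_map.mp (List.mem_toFinset.mp hx)
        exact hs v

theorem two_le_dpathLen_couplingDAG [Fintype V] {u v : V} (huv : G.Adj u v) (hp : p u < p v) :
    2 ≤ dpathLen (couplingDAG G p) :=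
  length_le_dpathLen (l := [u, v]) (by simpa [List.isChain_cons_cons] using ⟨huv, hp⟩)
    (by simpa using huv.ne)

theorem dpathLen_couplingDAG_le_card {s : Finset ℕ} (hs : ∀ v, p v ∈ s) :
    dpathLen (couplingDAG G p) ≤ s.card :=
  dpathLen_le_of_forall fun _ hc _ => length_le_card_of_isChain_couplingDAG hs hc

end couplingDAG

theorem isChain_finRange_couplingDAG_pathGraph (n : ℕ) :
    (List.finRange n).IsChain (couplingDAG (SimpleGraph.pathGraph n) (fun v : Fin n => (v : ℕ))) := by
  rw [List.isChain_iff_getElem]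
  intro i hi
  simp only [List.getElem_finRange]
  exact ⟨SimpleGraph.pathGraph_adj.mpr (Or.inl (by simp)), by simp⟩

theorem validPrio_pathGraph_parity (n : ℕ) :
    ValidPrio (SimpleGraph.pathGraph n) (fun v : Fin n => (v : ℕ) % 2 + 1) := by
  intro i j hij h
  simp only at h
  rcases SimpleGraph.pathGraph_adj.mp hij with h' | h' <;> omega

theorem stmt10 (n : ℕ) (hn : 2 ≤ n) :
    dpathLen (couplingDAG (SimpleGraph.pathGraph n) (fun v : Fin n => (v : ℕ))) = n ∧
      ∃ φ : Fin n → ℕ, (∀ v, φ v = 1 ∨ φ v = 2) ∧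
        ValidPrio (SimpleGraph.pathGraph n) φ ∧
        dpathLen (couplingDAG (SimpleGraph.pathGraph n) φ) = 2 := by
  have hvalues : ∀ v : Fin n, (v : ℕ) % 2 + 1 = 1 ∨ (v : ℕ) % 2 + 1 = 2 := fun v => by omega
  refine ⟨le_antisymm ?_ ?_, fun v => (v : ℕ) % 2 + 1, hvalues,
    validPrio_pathGraph_parity n, le_antisymm ?_ ?_⟩
  · exact dpathLen_le_card.trans_eq (Fintype.card_fin n)
  · simpa using length_le_dpathLen (isChain_finRange_couplingDAG_pathGraph n) (List.nodup_finRange n)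
  · exact dpathLen_couplingDAG_le_card (s := {1, 2}) fun v => by
      rcases hvalues v with h | h <;> simp [h]
  · exact two_le_dpathLen_couplingDAG (u := ⟨0, by omega⟩) (v := ⟨1, by omega⟩)
      (SimpleGraph.pathGraph_adj.mpr (Or.inl rfl)) (by simp)
end
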